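/- For all n ≥ 3, the simple centralizer of x_{n−1} in SB_n is the disjoint union C_n(x_{n−1}) = SB_{n−2} ⊔ x_{n−1}·SB_{n−2}, where x_{n−1}·SB_{n−2} = {x_{n−1} γ : γ ∈ SB_{n−2}}; that is, every element of C_n(x_{n−1}) lies in exactly one of these two sets, and both sets are contained in C_n(x_{n−1}). -/

import Mathlib

/-- The defining relations of the positive braid monoid `MB_∞` on generators
`x i`, `i : ℕ+`: the braid relations and the far-commutation relations. -/
def BraidRel : FreeMonoid ℕ+ → FreeMonoid ℕ+ → Prop := fun a b =>
  (∃ i : ℕ+, a = FreeMonoid.of (i + 1) * FreeMonoid.of i * FreeMonoid.of (i + 1) ∧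
      b = FreeMonoid.of i * FreeMonoid.of (i + 1) * FreeMonoid.of i) ∨
  (∃ i j : ℕ+, i + 2 ≤ j ∧ a = FreeMonoid.of i * FreeMonoid.of j ∧
      b = FreeMonoid.of j * FreeMonoid.of i)

/-- The congruence generated by the braid relations. -/
def braidCon : Con (FreeMonoid ℕ+) := conGen BraidRel

/-- The positive braid monoid `MB_∞`. -/
abbrev MB : Type := braidCon.Quotient

/-- The generator `x_i` of `MB_∞`, for `i : ℕ+`. -/
def braidGen (i : ℕ+) : MB := braidCon.mk' (FreeMonoid.of i)

/-- The generator `x_i` of `MB_∞`, indexed by a natural number `i ≥ 1`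
(junk value `x_1` for `i = 0`). -/
def X (i : ℕ) : MB := braidGen ⟨max i 1, lt_of_lt_of_le one_pos (le_max_right i 1)⟩

/-- `x_i` divides `β`: `β = δ * x_i * ε` for some `δ ε ∈ MB_∞`. -/
def GenDvd (i : ℕ) (β : MB) : Prop := ∃ δ ε : MB, β = δ * X i * ε

/-- `x_i` left-divides `β`: `β = x_i * ε` for some `ε ∈ MB_∞`. -/
def GenDvdL (i : ℕ) (β : MB) : Prop := ∃ ε : MB, β = X i * ε

/-- `x_i` right-divides `β`: `β = δ * x_i` for some `δ ∈ MB_∞`. -/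
def GenDvdR (i : ℕ) (β : MB) : Prop := ∃ δ : MB, β = δ * X i

/-- The set `SB_n` of simple braids in `MB_n`: products of words in the
generators `x_1, …, x_{n-1}` in which each generator appears at most once. -/
def SB (n : ℕ) : Set MB :=
  {β | ∃ w : List ℕ, w.Nodup ∧ (∀ i ∈ w, 1 ≤ i ∧ i < n) ∧ β = (w.map X).prod}

/-- The simple centralizer `C_n(β)` of `β` in `SB_n`. -/
def C (n : ℕ) (β : MB) : Set MB := {γ ∈ SB n | β * γ = γ * β}

/-- `c_n(β)`, the cardinality of the simple centralizer `C_n(β)`. -/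
noncomputable def c (n : ℕ) (β : MB) : ℕ := (C n β).ncard

/-!
Braids act on `ℕ` through the permutation representation `x_i ↦ (i i+1)`. In a simple braid
each generator occurs once, so if `γ ∈ SB_n` contains `x_{n-2}`, its image carries one of the
points `n-1, n` below `n-1`; a permutation commuting with the transposition `(n-1 n)` cannot do
that. Hence every `γ ∈ C_n(x_{n-1})` is a word in `x_{n-1}` and generators commuting with it,
and `x_{n-1}` can be pulled to the front. The two pieces are told apart by where their images
send `n`: `SB_{n-2}` fixes it, `x_{n-1}·SB_{n-2}` moves it to `n-1`.
-/

open Set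

theorem List.prod_map_eq_mul_prod_map_erase {α M : Type*} [Monoid M] [DecidableEq α]
    (f : α → M) {l : List α} {a : α} (ha : a ∈ l) (hc : ∀ b ∈ l, b ≠ a → Commute (f b) (f a)) :
    (l.map f).prod = f a * ((l.erase a).map f).prod := by
  induction l with
  | nil => simp at ha
  | cons b t ih =>
    rcases eq_or_ne b a with rfl | hba
    · simp
    · have hat : a ∈ t := (List.mem_cons.mp ha).resolve_left hba.symm
      rw [List.erase_cons_tail (by simpa using hba), List.map_cons, List.map_cons,
        List.prod_cons, List.prod_cons,
        ih hat fun c hc' hca => hc c (List.mem_cons_of_mem b hc') hca,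
        ← mul_assoc, (hc b List.mem_cons_self hba).eq, mul_assoc]

def adjSwap (i : ℕ) : Equiv.Perm ℕ := Equiv.swap i (i + 1)

theorem adjSwap_braid (i : ℕ) :
    adjSwap (i + 1) * adjSwap i * adjSwap (i + 1) = adjSwap i * adjSwap (i + 1) * adjSwap i := by
  ext x
  simp only [adjSwap, Equiv.Perm.mul_apply, Equiv.swap_apply_def]
  split_ifs <;> omega

theorem adjSwap_commute {i j : ℕ} (h : i + 2 ≤ j) : Commute (adjSwap i) (adjSwap j) := by
  ext x
  simp only [adjSwap, Equiv.Perm.mul_apply, Equiv.swap_apply_def]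
  split_ifs <;> omega

theorem adjSwap_apply_of_ne {i x : ℕ} (h₁ : x ≠ i) (h₂ : x ≠ i + 1) : adjSwap i x = x :=
  Equiv.swap_apply_of_ne_of_ne h₁ h₂

theorem mapsTo_adjSwap_Iic {i k : ℕ} (h : i ≠ k) : MapsTo (adjSwap i) (Iic k) (Iic k) := by
  intro x (hx : x ≤ k)
  simp only [adjSwap, mem_Iic, Equiv.swap_apply_def]
  split_ifs <;> omega

theorem mapsTo_prod_adjSwap_Iic {w : List ℕ} {k : ℕ} (hk : k ∉ w) :
    MapsTo (w.map adjSwap).prod (Iic k) (Iic k) :=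
  List.prod_induction (fun σ : Equiv.Perm ℕ => MapsTo σ (Iic k) (Iic k))
    (fun _ _ hσ hτ => hσ.comp hτ) (mapsTo_id _)
    (by
      simp only [List.mem_map]
      rintro _ ⟨i, hi, rfl⟩
      exact mapsTo_adjSwap_Iic fun h => hk (h ▸ hi))

theorem prod_adjSwap_apply_of_forall_lt {w : List ℕ} {x : ℕ} (hw : ∀ i ∈ w, i + 1 < x) :
    (w.map adjSwap).prod x = x :=
  List.prod_induction (fun σ : Equiv.Perm ℕ => σ x = x)
    (fun σ τ hσ hτ => by rw [Equiv.Perm.mul_apply, hτ, hσ]) rfl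
    (by
      simp only [List.mem_map]
      rintro _ ⟨i, hi, rfl⟩
      have := hw i hi
      exact adjSwap_apply_of_ne (by omega) (by omega))

theorem exists_prod_adjSwap_apply_le {k m : ℕ} {w : List ℕ} (hw : w.Nodup) (hk : k ∈ w)
    (hm : ∀ i ∈ w, i ≤ m) : ∃ x, k < x ∧ x ≤ m + 1 ∧ (w.map adjSwap).prod x ≤ k := by
  induction w using List.reverseRecOn with
  | nil => simp at hk
  | append_singleton t a ih =>
    have hnd := List.nodup_append.mp hw
    have hma : a ≤ m := hm a (by simp)
    simp only [List.map_append, List.map_singleton, List.prod_append, List.prod_singleton,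
      Equiv.Perm.mul_apply]
    rcases eq_or_ne a k with rfl | hak
    · have hat : a ∉ t := fun h => hnd.2.2 a h a (by simp) rfl
      refine ⟨a + 1, by omega, by omega, ?_⟩
      rw [adjSwap, Equiv.swap_apply_right]
      exact mapsTo_prod_adjSwap_Iic hat (le_refl a)
    · have hkt : k ∈ t := by simpa [hak.symm] using hk
      obtain ⟨x, hkx, hxm, hx⟩ := ih hnd.1 hkt fun i hi => hm i (by simp [hi])
      -- `(a a+1)` with `a ≠ k` and `a ≤ m` maps `(k, m+1]` to itself.
      refine ⟨adjSwap a x, ?_, ?_, by rwa [adjSwap, Equiv.swap_apply_self]⟩ <;>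
        · simp only [adjSwap, Equiv.swap_apply_def]
          split_ifs <;> omega

theorem not_commute_adjSwap_prod_adjSwap {k : ℕ} {w : List ℕ} (hw : w.Nodup) (hk : k ∈ w)
    (hm : ∀ i ∈ w, i ≤ k + 1) : ¬Commute (adjSwap (k + 1)) (w.map adjSwap).prod := by
  intro hc
  obtain ⟨x, hkx, hxk, hx⟩ := exists_prod_adjSwap_apply_le hw hk hm
  set p := (w.map adjSwap).prod
  have hfix : adjSwap (k + 1) (p x) = p x := adjSwap_apply_of_ne (by omega) (by omega)
  have hmove : adjSwap (k + 1) x ≠ x := by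
    simp only [adjSwap, Equiv.swap_apply_def]
    split_ifs <;> omega
  refine hmove (p.injective ?_)
  rw [← Equiv.Perm.mul_apply, ← hc.eq, Equiv.Perm.mul_apply, hfix]

def braidPerm : MB →* Equiv.Perm ℕ :=
  Con.lift braidCon (FreeMonoid.lift fun i => adjSwap i) <| Con.conGen_le.mpr <| by
    rintro a b (⟨i, rfl, rfl⟩ | ⟨i, j, hij, rfl, rfl⟩) <;>
      simp only [Con.ker_rel, map_mul, FreeMonoid.lift_eval_of]
    · exact adjSwap_braid i
    · exact (adjSwap_commute (by exact_mod_cast hij)).eq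

theorem braidPerm_X {i : ℕ} (hi : 1 ≤ i) : braidPerm (X i) = adjSwap i := by
  unfold X braidGen braidPerm
  erw [Con.lift_mk', FreeMonoid.lift_eval_of]
  simp [Nat.max_eq_left hi]

theorem braidPerm_list_prod {w : List ℕ} (hw : ∀ i ∈ w, 1 ≤ i) :
    braidPerm (w.map X).prod = (w.map adjSwap).prod := by
  rw [map_list_prod, List.map_map]
  exact congrArg List.prod (List.map_congr_left fun i hi => braidPerm_X (hw i hi))

theorem braidPerm_apply_of_mem_SB {m x : ℕ} {β : MB} (hβ : β ∈ SB m) (hx : m < x) :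
    braidPerm β x = x := by
  obtain ⟨w, -, hw, rfl⟩ := hβ
  rw [braidPerm_list_prod fun i hi => (hw i hi).1]
  exact prod_adjSwap_apply_of_forall_lt fun i hi => by have := (hw i hi).2; omega

theorem commute_X {i j : ℕ} (hi : 1 ≤ i) (hij : i + 2 ≤ j) : Commute (X i) (X j) := by
  refine (Con.eq braidCon).mpr
    (ConGen.Rel.of _ _ (Or.inr ⟨_, _, (PNat.coe_le_coe _ _).mp ?_, rfl, rfl⟩))
  change max i 1 + 2 ≤ max j 1
  omega

theorem SB_mono {m n : ℕ} (h : m ≤ n) : SB m ⊆ SB n := by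
  rintro _ ⟨w, hnd, hw, rfl⟩
  exact ⟨w, hnd, fun i hi => ⟨(hw i hi).1, (hw i hi).2.trans_le h⟩, rfl⟩

theorem commute_X_of_mem_SB {k : ℕ} {β : MB} (hβ : β ∈ SB k) : Commute (X (k + 1)) β := by
  obtain ⟨w, -, hw, rfl⟩ := hβ
  exact Commute.list_prod_right _ _ fun _ hx => by
    obtain ⟨i, hi, rfl⟩ := List.mem_map.mp hx
    exact (commute_X (hw i hi).1 (by have := (hw i hi).2; omega)).symm

theorem X_mul_mem_SB {k : ℕ} {β : MB} (hβ : β ∈ SB k) : X (k + 1) * β ∈ SB (k + 2) := by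
  obtain ⟨w, hnd, hw, rfl⟩ := hβ
  refine ⟨(k + 1) :: w, List.nodup_cons.mpr ⟨fun h => ?_, hnd⟩, ?_, rfl⟩
  · have := (hw _ h).2; omega
  · simp only [List.mem_cons, forall_eq_or_imp]
    exact ⟨by omega, fun i hi => ⟨(hw i hi).1, by have := (hw i hi).2; omega⟩⟩

theorem SB_subset_C (k : ℕ) : SB k ⊆ C (k + 2) (X (k + 1)) :=
  fun _ hβ => ⟨SB_mono (by omega) hβ, (commute_X_of_mem_SB hβ).eq⟩

theorem X_mul_SB_subset_C (k : ℕ) :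
    (fun γ => X (k + 1) * γ) '' SB k ⊆ C (k + 2) (X (k + 1)) := by
  rintro _ ⟨β, hβ, rfl⟩
  exact ⟨X_mul_mem_SB hβ, ((Commute.refl _).mul_right (commute_X_of_mem_SB hβ)).eq⟩

theorem C_X_subset_union (k : ℕ) :
    C (k + 2) (X (k + 1)) ⊆ SB k ∪ (fun γ => X (k + 1) * γ) '' SB k := by
  rintro _ ⟨⟨w, hnd, hw, rfl⟩, hcomm⟩
  have hk : k ∉ w := by
    intro hk
    refine not_commute_adjSwap_prod_adjSwap hnd hk (fun i hi => by have := (hw i hi).2; omega) ?_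
    have := (show Commute (X (k + 1)) (w.map X).prod from hcomm).map braidPerm
    rwa [braidPerm_X (by omega), braidPerm_list_prod fun i hi => (hw i hi).1] at this
  by_cases hk1 : k + 1 ∈ w
  · right
    refine ⟨((w.erase (k + 1)).map X).prod, ⟨_, hnd.erase _, fun i hi => ?_, rfl⟩, ?_⟩
    · have hiw := List.mem_of_mem_erase hi
      have hik1 : i ≠ k + 1 := fun h => (hnd.not_mem_erase) (h ▸ hi)
      have hik : i ≠ k := fun h => hk (h ▸ hiw)
      exact ⟨(hw i hiw).1, by have := (hw i hiw).2; omega⟩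
    · refine (List.prod_map_eq_mul_prod_map_erase X hk1 fun i hi hik1 => ?_).symm
      have hik : i ≠ k := fun h => hk (h ▸ hi)
      exact commute_X (hw i hi).1 (by have := (hw i hi).2; omega)
  · left
    refine ⟨w, hnd, fun i hi => ⟨(hw i hi).1, ?_⟩, rfl⟩
    have hik1 : i ≠ k + 1 := fun h => hk1 (h ▸ hi)
    have hik : i ≠ k := fun h => hk (h ▸ hi)
    have := (hw i hi).2
    omega

theorem disjoint_SB_X_mul_SB (k : ℕ) :
    Disjoint (SB k) ((fun γ => X (k + 1) * γ) '' SB k) := by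
  rw [Set.disjoint_left]
  rintro _ hXγ ⟨γ, hγ, rfl⟩
  have h := braidPerm_apply_of_mem_SB hXγ (by omega : k < k + 2)
  rw [map_mul, Equiv.Perm.mul_apply, braidPerm_apply_of_mem_SB hγ (by omega),
    braidPerm_X (by omega), adjSwap, Equiv.swap_apply_right] at h
  omega

theorem C_X_eq_union (k : ℕ) :
    C (k + 2) (X (k + 1)) = SB k ∪ (fun γ => X (k + 1) * γ) '' SB k :=
  (C_X_subset_union k).antisymm (union_subset (SB_subset_C k) (X_mul_SB_subset_C k))

/-- The simple centralizer of `x_{n-1}` in `SB_n` is the disjoint union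
`SB_{n-2} ⊔ x_{n-1}·SB_{n-2}` for all `n ≥ 3`. -/
theorem centralizer_top_gen_eq_disjoint_union (n : ℕ) (hn : 3 ≤ n) :
    C n (X (n - 1)) = SB (n - 2) ∪ (fun γ => X (n - 1) * γ) '' SB (n - 2) ∧
    Disjoint (SB (n - 2)) ((fun γ => X (n - 1) * γ) '' SB (n - 2)) := by
  obtain ⟨k, rfl⟩ : ∃ k, n = k + 2 := ⟨n - 2, by omega⟩
  exact ⟨C_X_eq_union k, disjoint_SB_X_mul_SB k⟩
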